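/- Let p be an odd prime and r ≥ 1, and let A = N_{p^r}[p^r] ⊕ ⊕_{h=1}^{(p^r−3)/2} M_{p^r}, a square integer matrix of size p^r(p^r−1)/2. Then the characteristic polynomial of A is (x^{p^r} − 1)^{(p^r−1)/2}; moreover A^{p^r} = I, the trace of A^k equals 0 for every integer k with 1 ≤ k ≤ p^r − 1, and the trace of A^{p^r} equals p^r(p^r−1)/2 (so every complex character of Z_{p^r} occurs with multiplicity (p^r−1)/2 in the holonomy representation of Γ_{p^r}; since (p^r−1)/2 is even exactly when p^r ≡ 1 mod 4, this is the algebraic content of the fact that the associated flat manifold is Kähler if and only if p^r = 4u + 1 for some integer u ≥ 1). -/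

import Mathlib

/-! Matrices `N_z[q]`, `M_z`, and block-diagonal sums. -/

/-- The `z × z` integer matrix `N_z[q]`: `(N)_{1,1} = 1`, `(N)_{1,z} = q`,
`(N)_{i,z} = -1` for `2 ≤ i ≤ z`, `(N)_{i,i-1} = 1` for `3 ≤ i ≤ z`, all other entries `0`
(indices here are 1-based; in Lean we use 0-based `Fin z`). -/
def NMat (z : ℕ) (q : ℤ) : Matrix (Fin z) (Fin z) ℤ := fun i j =>
  if (i : ℕ) = 0 then (if (j : ℕ) = 0 then 1 else if (j : ℕ) = z - 1 then q else 0)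
  else ((if (j : ℕ) + 1 = (i : ℕ) ∧ 2 ≤ (i : ℕ) then 1 else 0) +
        (if (j : ℕ) = z - 1 then -1 else 0))

/-- The `z × z` integer matrix `M_z`: `(M)_{1,z} = 1`, `(M)_{i,i-1} = 1` for `2 ≤ i ≤ z`,
all other entries `0`; this is the companion matrix of `x^z - 1`. -/
def MMat (z : ℕ) : Matrix (Fin z) (Fin z) ℤ := fun i j =>
  if ((j : ℕ) + 1 = (i : ℕ)) ∨ ((i : ℕ) = 0 ∧ (j : ℕ) = z - 1) then 1 else 0

/-- Block-diagonal sum of a family of square integer matrices. -/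
def blockDiag {ι : Type*} [DecidableEq ι] {z : ι → ℕ}
    (B : ∀ i, Matrix (Fin (z i)) (Fin (z i)) ℤ) :
    Matrix ((i : ι) × Fin (z i)) ((i : ι) × Fin (z i)) ℤ := fun x y =>
  if h : y.1 = x.1 then B x.1 x.2 (Fin.cast (congrArg z h) y.2) else 0

/-- The index type of the block structure of the matrix `A(q)`:
for each `j : Fin t` there are `(p_j^{r_j}-1)/2` blocks of size `p_j^{r_j}`
(one `N`-block and `(p_j^{r_j}-3)/2` `M`-blocks), and for each pair `j < h` one block of
size `p_j^{r_j} p_h^{r_h}`. -/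
abbrev AIdx (t : ℕ) (p r : Fin t → ℕ) : Type :=
  ((j : Fin t) × Fin ((p j ^ r j - 1) / 2)) ⊕ {x : Fin t × Fin t // x.1 < x.2}

/-- The sizes of the blocks of `A(q)`. -/
def ASize (t : ℕ) (p r : Fin t → ℕ) : AIdx t p r → ℕ
  | .inl x => p x.1 ^ r x.1
  | .inr x => p x.1.1 ^ r x.1.1 * p x.1.2 ^ r x.1.2

/-- The blocks of `A(q)`: for each `j : Fin t` the block `N_{p_j^{r_j}}[q]` followed by
`(p_j^{r_j}-3)/2` copies of `M_{p_j^{r_j}}`, and for each pair `j < h` the block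
`M_{p_j^{r_j} p_h^{r_h}}`. -/
def ABlocks (t : ℕ) (p r : Fin t → ℕ) (q : ℤ) :
    ∀ k : AIdx t p r, Matrix (Fin (ASize t p r k)) (Fin (ASize t p r k)) ℤ
  | .inl x => if (x.2 : ℕ) = 0 then NMat (p x.1 ^ r x.1) q else MMat (p x.1 ^ r x.1)
  | .inr x => MMat (p x.1.1 ^ r x.1.1 * p x.1.2 ^ r x.1.2)

/-- The block-diagonal matrix
`A(q) = ⊕_j (N_{p_j^{r_j}}[q] ⊕ ⊕_h M_{p_j^{r_j}}) ⊕ ⊕_{j<h} M_{p_j^{r_j} p_h^{r_h}}`. -/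
def AMat (t : ℕ) (p r : Fin t → ℕ) (q : ℤ) :
    Matrix ((k : AIdx t p r) × Fin (ASize t p r k))
      ((k : AIdx t p r) × Fin (ASize t p r k)) ℤ :=
  blockDiag (ABlocks t p r q)

/-! ### Auxiliary development -/

open Polynomial Matrix Finset Equiv

section FinFacts

variable {n : ℕ}

lemma fin_add_one_val (j : Fin (n + 2)) :
    ((j + 1 : Fin (n + 2)) : ℕ) = if (j : ℕ) = n + 1 then 0 else (j : ℕ) + 1 := by
  have hlast : (j = Fin.last (n + 1)) ↔ ((j : ℕ) = n + 1) := by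
    rw [Fin.ext_iff, Fin.val_last]
  rw [Fin.val_add_one]
  by_cases h : (j : ℕ) = n + 1
  · rw [if_pos (hlast.mpr h), if_pos h]
  · rw [if_neg (fun hh => h (hlast.mp hh)), if_neg h]

lemma fin_self_ne_add_one (j : Fin (n + 2)) : j ≠ j + 1 := by
  intro h
  have := congrArg Fin.val h
  rw [fin_add_one_val] at this
  have := j.isLt
  split_ifs at * <;> omega

end FinFacts

section MFacts

variable {n : ℕ}

open Fin.NatCast

lemma MMat_apply (i j : Fin (n + 2)) :
    MMat (n + 2) i j = if i = j + 1 then 1 else 0 := by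
  unfold MMat
  refine if_congr ?_ rfl rfl
  rw [Fin.ext_iff, fin_add_one_val]
  have := i.isLt; have := j.isLt
  split_ifs <;> omega

lemma MMat_eq_perm : MMat (n + 2) = ((finRotate (n + 2))⁻¹).permMatrix ℤ := by
  ext i j
  rw [MMat_apply]
  have hiff : ((finRotate (n + 2))⁻¹ i = j) ↔ (i = j + 1) := by
    rw [Equiv.Perm.inv_eq_iff_eq, finRotate_succ_apply]
  simp only [Equiv.Perm.permMatrix, PEquiv.toMatrix_apply, Equiv.toPEquiv_apply,
    Option.mem_def, Option.some.injEq]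
  exact (if_congr hiff rfl rfl).symm

lemma permMatrix_pow {N : Type*} [DecidableEq N] [Fintype N] (σ : Equiv.Perm N) (k : ℕ) :
    (σ.permMatrix ℤ) ^ k = (σ ^ k).permMatrix ℤ := by
  induction k with
  | zero =>
      rw [pow_zero, pow_zero]
      show _ = ((1 : Equiv.Perm N).toPEquiv.toMatrix : Matrix N N ℤ)
      rw [show (1 : Equiv.Perm N) = Equiv.refl N from rfl, Equiv.toPEquiv_refl,
        PEquiv.toMatrix_refl]
  | succ k ih =>
      rw [pow_succ, ih, pow_succ']
      show _ = (((σ ^ k).trans σ).toPEquiv.toMatrix : Matrix N N ℤ)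
      rw [Equiv.toPEquiv_trans, PEquiv.toMatrix_trans]

lemma finRotate_pow_apply (k : ℕ) (x : Fin (n + 2)) :
    ((finRotate (n + 2)) ^ k) x = x + (k : Fin (n + 2)) := by
  induction k generalizing x with
  | zero => simp
  | succ k ih =>
      rw [pow_succ, Equiv.Perm.mul_apply, finRotate_succ_apply, ih]
      push_cast
      abel

lemma finRotate_pow_eq_one : (finRotate (n + 2)) ^ (n + 2) = 1 := by
  ext x
  rw [finRotate_pow_apply, Fin.natCast_self, add_zero]
  rfl

lemma MMat_pow_eq_one : (MMat (n + 2)) ^ (n + 2) = 1 := by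
  rw [MMat_eq_perm, permMatrix_pow, inv_pow, finRotate_pow_eq_one, inv_one]
  show ((1 : Equiv.Perm (Fin (n + 2))).toPEquiv.toMatrix : Matrix _ _ ℤ) = 1
  rw [show (1 : Equiv.Perm (Fin (n + 2))) = Equiv.refl _ from rfl, Equiv.toPEquiv_refl,
    PEquiv.toMatrix_refl]

lemma MMat_pow_trace (k : ℕ) (hk : ¬ (n + 2) ∣ k) : ((MMat (n + 2)) ^ k).trace = 0 := by
  rw [MMat_eq_perm, permMatrix_pow, Matrix.trace_permutation]
  have : Function.fixedPoints (((finRotate (n + 2))⁻¹) ^ k) = ∅ := by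
    ext x
    simp only [Function.fixedPoints, Function.IsFixedPt, Set.mem_setOf_eq, Set.mem_empty_iff_false,
      iff_false, inv_pow]
    rw [Equiv.Perm.inv_eq_iff_eq, finRotate_pow_apply]
    intro h
    have h2 : (k : Fin (n + 2)) = 0 := by rwa [left_eq_add] at h
    rw [Fin.natCast_eq_zero] at h2
    exact hk h2
  rw [this, Set.ncard_empty, Nat.cast_zero]

end MFacts

section MCharpoly

variable {n : ℕ}

lemma charmatrix_MMat_apply (i j : Fin (n + 2)) :
    charmatrix (MMat (n + 2)) i j
      = (if i = j then X else 0) + (if i = j + 1 then -1 else 0) := by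
  rw [charmatrix_apply, MMat_apply]
  by_cases h1 : i = j <;> by_cases h2 : i = j + 1 <;>
    simp [Matrix.diagonal_apply, h1, h2, sub_eq_add_neg]

/-- The row-operation matrix for triangularizing `charmatrix (MMat z)`. -/
noncomputable def UM (n : ℕ) : Matrix (Fin (n + 2)) (Fin (n + 2)) ℤ[X] :=
  fun i j => if (i : ℕ) = 0 then X ^ (j : ℕ) else if i = j then 1 else 0

/-- The result of the row operation. -/
noncomputable def DM (n : ℕ) : Matrix (Fin (n + 2)) (Fin (n + 2)) ℤ[X] :=
  fun i j => if (i : ℕ) = 0 then (if (j : ℕ) = n + 1 then X ^ (n + 2) - 1 else 0)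
    else charmatrix (MMat (n + 2)) i j

lemma UM_mul_charmatrix : UM n * charmatrix (MMat (n + 2)) = DM n := by
  ext i j
  rw [Matrix.mul_apply]
  by_cases hi : (i : ℕ) = 0
  · have hsum : ∀ k : Fin (n + 2), UM n i k * charmatrix (MMat (n + 2)) k j
        = (if k = j then X ^ ((j : ℕ) + 1) else 0)
          + (if k = j + 1 then -(X ^ (((j + 1 : Fin (n + 2))) : ℕ)) else 0) := by
      intro k
      simp only [UM]
      rw [if_pos hi, charmatrix_MMat_apply, mul_add]
      congr 1
      · by_cases h : k = j
        · subst h; rw [if_pos rfl, if_pos rfl, ← pow_succ]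
        · rw [if_neg h, if_neg h, mul_zero]
      · by_cases h : k = j + 1
        · subst h; rw [if_pos rfl, if_pos rfl]; ring
        · rw [if_neg h, if_neg h, mul_zero]
    rw [Finset.sum_congr rfl (fun k _ => hsum k), Finset.sum_add_distrib,
      Finset.sum_ite_eq' Finset.univ j (fun _ => X ^ ((j : ℕ) + 1)),
      Finset.sum_ite_eq' Finset.univ (j + 1)
        (fun _ => -(X ^ (((j + 1 : Fin (n + 2))) : ℕ)))]
    rw [if_pos (Finset.mem_univ j), if_pos (Finset.mem_univ (j + 1))]
    simp only [DM]
    rw [if_pos hi, fin_add_one_val]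
    by_cases hj : (j : ℕ) = n + 1
    · rw [if_pos hj, if_pos hj, hj, pow_zero]
      ring
    · rw [if_neg hj, if_neg hj]
      ring
  · have hsum : ∀ k : Fin (n + 2), UM n i k * charmatrix (MMat (n + 2)) k j
        = if i = k then charmatrix (MMat (n + 2)) k j else 0 := by
      intro k
      simp only [UM]
      rw [if_neg hi]
      by_cases h : i = k
      · rw [if_pos h, if_pos h, one_mul]
      · rw [if_neg h, if_neg h, zero_mul]
    rw [Finset.sum_congr rfl (fun k _ => hsum k), Finset.sum_ite_eq Finset.univ i
      (fun k => charmatrix (MMat (n + 2)) k j)]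
    rw [if_pos (Finset.mem_univ i)]
    simp only [DM]
    rw [if_neg hi]

lemma UM_blockTriangular : (UM n).BlockTriangular id := by
  intro i j h
  have hij : (j : ℕ) < (i : ℕ) := h
  simp only [UM]
  rw [if_neg (by omega), if_neg (by intro hh; subst hh; exact lt_irrefl _ hij)]

lemma UM_det : (UM n).det = 1 := by
  rw [Matrix.det_of_upperTriangular UM_blockTriangular]
  refine Finset.prod_eq_one fun i _ => ?_
  by_cases h : (i : ℕ) = 0 <;> simp [UM, h]

lemma DM_submatrix_blockTriangular :
    ((DM n).submatrix (finRotate (n + 2)) id).BlockTriangular id := by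
  intro i j h
  have hij : (j : ℕ) < (i : ℕ) := h
  have hi := i.isLt
  have hj := j.isLt
  rw [Matrix.submatrix_apply, finRotate_succ_apply]
  simp only [id, DM]
  by_cases hlast : (i : ℕ) = n + 1
  · rw [if_pos (by rw [fin_add_one_val, if_pos hlast]), if_neg (by omega)]
  · rw [if_neg (by rw [fin_add_one_val, if_neg hlast]; omega), charmatrix_MMat_apply]
    have h1 : ¬ (i + 1 = j) := by
      intro hh
      have := congrArg Fin.val hh
      rw [fin_add_one_val, if_neg hlast] at this
      omega
    have h2 : ¬ (i + 1 = j + 1) := by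
      intro hh
      have : i = j := add_right_cancel hh
      subst this; omega
    rw [if_neg h1, if_neg h2, add_zero]

lemma DM_det : (DM n).det = X ^ (n + 2) - 1 := by
  have hE := Matrix.det_permute (finRotate (n + 2)) (DM n)
  rw [Matrix.det_of_upperTriangular DM_submatrix_blockTriangular] at hE
  have hdiag : ∀ i : Fin (n + 2), ((DM n).submatrix (finRotate (n + 2)) id) i i
      = if i = Fin.last (n + 1) then X ^ (n + 2) - 1 else -1 := by
    intro i
    rw [Matrix.submatrix_apply, finRotate_succ_apply]
    simp only [id, DM]
    by_cases hlast : i = Fin.last (n + 1)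
    · subst hlast
      have h0 : ((Fin.last (n + 1) + 1 : Fin (n + 2)) : ℕ) = 0 := by
        rw [fin_add_one_val, if_pos (Fin.val_last _)]
      rw [if_pos h0, if_pos (Fin.val_last _), if_pos rfl]
    · have hv : (i : ℕ) ≠ n + 1 := fun hh => hlast (Fin.ext hh)
      rw [if_neg (by rw [fin_add_one_val, if_neg hv]; omega), charmatrix_MMat_apply,
        if_neg (Ne.symm (fin_self_ne_add_one i)), if_pos rfl, if_neg hlast, zero_add]
  rw [Finset.prod_congr rfl (fun i _ => hdiag i)] at hE
  rw [Fin.prod_univ_castSucc] at hE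
  have hcast : ∀ i : Fin (n + 1), (if (Fin.castSucc i) = Fin.last (n + 1)
      then (X : ℤ[X]) ^ (n + 2) - 1 else -1) = -1 := by
    intro i
    rw [if_neg (Fin.castSucc_lt_last i).ne]
  rw [Finset.prod_congr rfl (fun i _ => hcast i), if_pos rfl, Finset.prod_const,
    Finset.card_univ, Fintype.card_fin, sign_finRotate] at hE
  have hc : ∀ (P : ℤ[X]), ((((-1 : ℤˣ) ^ (n + 1) : ℤˣ) : ℤ) : ℤ[X]) * P
      = (-1 : ℤ[X]) ^ (n + 1) * P := by
    intro P
    push_cast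
    ring_nf
  rw [show n + 2 - 1 = n + 1 by omega, hc] at hE
  have hne : ((-1 : ℤ[X]) ^ (n + 1)) ≠ 0 := pow_ne_zero _ (by norm_num)
  exact mul_left_cancel₀ hne hE.symm

lemma MMat_charpoly : (MMat (n + 2)).charpoly = X ^ (n + 2) - 1 := by
  have h := congrArg Matrix.det (UM_mul_charmatrix (n := n))
  rw [Matrix.det_mul, UM_det, one_mul, DM_det] at h
  exact h

end MCharpoly

section NFacts

variable {n : ℕ} {q : ℤ}

/-- The integer matrix with columns `e₁, e₂, …, e_{z-1}, w` conjugating `M` into `N`. -/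
def VMat (n : ℕ) (q : ℤ) : Matrix (Fin (n + 2)) (Fin (n + 2)) ℤ := fun i j =>
  if (j : ℕ) = n + 1 then (if (i : ℕ) = 0 then q else -1)
  else if (i : ℕ) = (j : ℕ) + 1 then 1 else 0

lemma NMat_eq_VMat (i k : Fin (n + 2)) (hk : (k : ℕ) ≠ 0) :
    NMat (n + 2) q i k = VMat n q i k := by
  have hi := i.isLt; have hkk := k.isLt
  simp only [NMat, VMat]
  split_ifs <;> omega

lemma NMat_col_zero (i : Fin (n + 2)) :
    NMat (n + 2) q i (0 : Fin (n + 2)) = if (i : ℕ) = 0 then 1 else 0 := by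
  have hi := i.isLt
  simp only [NMat, Fin.val_zero]
  split_ifs <;> omega

lemma NMat_row_sum (i : Fin (n + 2)) :
    ∑ k, NMat (n + 2) q i k
      = if (i : ℕ) = 0 then 1 + q else if (i : ℕ) = 1 then -1 else 0 := by
  have hi := i.isLt
  by_cases h0 : (i : ℕ) = 0
  · have hpt : ∀ k : Fin (n + 2), NMat (n + 2) q i k
        = (if k = (0 : Fin (n + 2)) then 1 else 0)
          + (if k = Fin.last (n + 1) then q else 0) := by
      intro k
      have hkk := k.isLt
      have e0 : (k = (0 : Fin (n + 2))) ↔ ((k : ℕ) = 0) := by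
        rw [Fin.ext_iff, Fin.val_zero]
      have e1 : (k = Fin.last (n + 1)) ↔ ((k : ℕ) = n + 1) := by
        rw [Fin.ext_iff, Fin.val_last]
      simp only [NMat, e0, e1]
      split_ifs <;> omega
    rw [Finset.sum_congr rfl (fun k _ => hpt k), Finset.sum_add_distrib,
      Finset.sum_ite_eq' Finset.univ (0 : Fin (n + 2)) (fun _ => (1 : ℤ)),
      Finset.sum_ite_eq' Finset.univ (Fin.last (n + 1)) (fun _ => q),
      if_pos (Finset.mem_univ _), if_pos (Finset.mem_univ _), if_pos h0]
  · by_cases h2 : 2 ≤ (i : ℕ)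
    · have hpt : ∀ k : Fin (n + 2), NMat (n + 2) q i k
          = (if k = (⟨(i : ℕ) - 1, by omega⟩ : Fin (n + 2)) then 1 else 0)
            + (if k = Fin.last (n + 1) then -1 else 0) := by
        intro k
        have hkk := k.isLt
        have e0 : (k = (⟨(i : ℕ) - 1, by omega⟩ : Fin (n + 2))) ↔ ((k : ℕ) = (i : ℕ) - 1) := by
          rw [Fin.ext_iff]
        have e1 : (k = Fin.last (n + 1)) ↔ ((k : ℕ) = n + 1) := by
          rw [Fin.ext_iff, Fin.val_last]
        simp only [NMat, e0, e1]
        split_ifs <;> omega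
      rw [Finset.sum_congr rfl (fun k _ => hpt k), Finset.sum_add_distrib,
        Finset.sum_ite_eq' Finset.univ (⟨(i : ℕ) - 1, by omega⟩ : Fin (n + 2))
          (fun _ => (1 : ℤ)),
        Finset.sum_ite_eq' Finset.univ (Fin.last (n + 1)) (fun _ => (-1 : ℤ)),
        if_pos (Finset.mem_univ _), if_pos (Finset.mem_univ _), if_neg h0,
        if_neg (by omega)]
      ring
    · have h1 : (i : ℕ) = 1 := by omega
      have hpt : ∀ k : Fin (n + 2), NMat (n + 2) q i k
          = if k = Fin.last (n + 1) then -1 else 0 := by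
        intro k
        have hkk := k.isLt
        have e1 : (k = Fin.last (n + 1)) ↔ ((k : ℕ) = n + 1) := by
          rw [Fin.ext_iff, Fin.val_last]
        simp only [NMat, e1]
        split_ifs <;> omega
      rw [Finset.sum_congr rfl (fun k _ => hpt k),
        Finset.sum_ite_eq' Finset.univ (Fin.last (n + 1)) (fun _ => (-1 : ℤ)),
        if_pos (Finset.mem_univ _), if_neg h0, if_pos h1]

lemma NMat_mul_VMat : NMat (n + 2) q * VMat n q = VMat n q * MMat (n + 2) := by
  ext i j
  rw [Matrix.mul_apply, Matrix.mul_apply]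
  have hRHS : ∑ k, VMat n q i k * MMat (n + 2) k j = VMat n q i (j + 1) := by
    have hpt : ∀ k : Fin (n + 2), VMat n q i k * MMat (n + 2) k j
        = if k = j + 1 then VMat n q i k else 0 := by
      intro k
      rw [MMat_apply]
      by_cases h : k = j + 1
      · rw [if_pos h, if_pos h, mul_one]
      · rw [if_neg h, if_neg h, mul_zero]
    rw [Finset.sum_congr rfl (fun k _ => hpt k),
      Finset.sum_ite_eq' Finset.univ (j + 1) (fun k => VMat n q i k),
      if_pos (Finset.mem_univ _)]
  rw [hRHS]
  by_cases hj : (j : ℕ) = n + 1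
  · -- column `z-1` : use row sums
    have hj1 : j + 1 = 0 := by
      rw [Fin.ext_iff, fin_add_one_val, if_pos hj]; rfl
    have hpt : ∀ k : Fin (n + 2), NMat (n + 2) q i k * VMat n q k j
        = (if k = (0 : Fin (n + 2)) then (q + 1) * NMat (n + 2) q i k else 0)
          + (- NMat (n + 2) q i k) := by
      intro k
      have hcol : VMat n q k j = if (k : ℕ) = 0 then q else -1 := by
        simp only [VMat]
        rw [if_pos hj]
      rw [hcol]
      by_cases h : k = (0 : Fin (n + 2))
      · rw [if_pos h, if_pos (by rw [h]; rfl)]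
        ring
      · rw [if_neg h, if_neg (by rw [Fin.ext_iff, Fin.val_zero] at h; exact h)]
        ring
    rw [Finset.sum_congr rfl (fun k _ => hpt k), Finset.sum_add_distrib,
      Finset.sum_ite_eq' Finset.univ (0 : Fin (n + 2))
        (fun k => (q + 1) * NMat (n + 2) q i k),
      if_pos (Finset.mem_univ _), Finset.sum_neg_distrib, NMat_row_sum,
      NMat_col_zero, hj1]
    have hV0 : VMat n q i (0 : Fin (n + 2)) = if (i : ℕ) = 1 then 1 else 0 := by
      simp only [VMat, Fin.val_zero]
      simp
    rw [hV0]
    have hi := i.isLt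
    split_ifs <;> ring_nf <;> omega
  · -- other columns
    have hj1 : ((j + 1 : Fin (n + 2)) : ℕ) = (j : ℕ) + 1 := by
      rw [fin_add_one_val, if_neg hj]
    have hpt : ∀ k : Fin (n + 2), NMat (n + 2) q i k * VMat n q k j
        = if k = j + 1 then NMat (n + 2) q i k else 0 := by
      intro k
      have hcol : VMat n q k j = if k = j + 1 then 1 else 0 := by
        simp only [VMat]
        rw [if_neg hj]
        refine if_congr ?_ rfl rfl
        rw [Fin.ext_iff, hj1]
      rw [hcol]
      by_cases h : k = j + 1
      · rw [if_pos h, if_pos h, mul_one]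
      · rw [if_neg h, if_neg h, mul_zero]
    rw [Finset.sum_congr rfl (fun k _ => hpt k),
      Finset.sum_ite_eq' Finset.univ (j + 1) (fun k => NMat (n + 2) q i k),
      if_pos (Finset.mem_univ _)]
    exact NMat_eq_VMat i (j + 1) (by rw [hj1]; omega)

lemma VMat_submatrix_blockTriangular :
    ((VMat n q).submatrix (finRotate (n + 2)) id).BlockTriangular id := by
  intro i j h
  simp only [id_eq] at h
  have hij : (j : ℕ) < (i : ℕ) := h
  have hi := i.isLt; have hj := j.isLt
  simp only [Matrix.submatrix_apply, finRotate_succ_apply, id_eq, VMat]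
  have hc1 : ¬ ((j : ℕ) = n + 1) := by omega
  have hc2 : ¬ (((i + 1 : Fin (n + 2)) : ℕ) = (j : ℕ) + 1) := by
    intro hh
    rw [fin_add_one_val] at hh
    split_ifs at hh <;> omega
  rw [if_neg hc1, if_neg hc2]

lemma VMat_det : (VMat n q).det = ((Equiv.Perm.sign (finRotate (n + 2)) : ℤ)) * q := by
  have hE := Matrix.det_permute (finRotate (n + 2)) (VMat n q)
  simp only [Int.cast_id] at hE
  rw [Matrix.det_of_upperTriangular VMat_submatrix_blockTriangular] at hE
  have hdiag : ∀ i : Fin (n + 2), ((VMat n q).submatrix (finRotate (n + 2)) id) i i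
      = if i = Fin.last (n + 1) then q else 1 := by
    intro i
    rw [Matrix.submatrix_apply, finRotate_succ_apply, id]
    simp only [VMat]
    by_cases hlast : i = Fin.last (n + 1)
    · subst hlast
      rw [if_pos (Fin.val_last _), if_pos, if_pos rfl]
      rw [fin_add_one_val, if_pos (Fin.val_last _)]
    · have hv : (i : ℕ) ≠ n + 1 := fun hh => hlast (Fin.ext hh)
      have hi := i.isLt
      rw [if_neg (by omega), if_pos (by rw [fin_add_one_val, if_neg hv]), if_neg hlast]
  rw [Finset.prod_congr rfl (fun i _ => hdiag i), Fin.prod_univ_castSucc] at hE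
  have hcast : ∀ i : Fin (n + 1), (if (Fin.castSucc i) = Fin.last (n + 1)
      then q else (1 : ℤ)) = 1 := fun i => if_neg (Fin.castSucc_lt_last i).ne
  rw [Finset.prod_congr rfl (fun i _ => hcast i), if_pos rfl, Finset.prod_const_one,
    one_mul] at hE
  have h2 : ((Equiv.Perm.sign (finRotate (n + 2)) : ℤ)) * ((Equiv.Perm.sign (finRotate (n + 2)) : ℤ)) = 1 := by
    rcases Int.units_eq_one_or (Equiv.Perm.sign (finRotate (n + 2))) with h | h <;>
      rw [h] <;> norm_num
  calc (VMat n q).det = (((Equiv.Perm.sign (finRotate (n + 2)) : ℤ))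
          * ((Equiv.Perm.sign (finRotate (n + 2)) : ℤ))) * (VMat n q).det := by
        rw [h2, one_mul]
    _ = ((Equiv.Perm.sign (finRotate (n + 2)) : ℤ)) * q := by
        rw [mul_assoc, ← hE]

lemma VMat_det_ne_zero (hq : q ≠ 0) : (VMat n q).det ≠ 0 := by
  rw [VMat_det]
  rcases Int.units_eq_one_or (Equiv.Perm.sign (finRotate (n + 2))) with h | h <;>
    rw [h] <;> simpa using hq

end NFacts

section Conj

variable {m : Type*} [Fintype m] [DecidableEq m]

lemma mconj_pow (V B : Matrix m m ℚ) (hV : IsUnit V.det) (k : ℕ) :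
    (V * B * V⁻¹) ^ k = V * B ^ k * V⁻¹ := by
  induction k with
  | zero => rw [pow_zero, pow_zero, mul_one, Matrix.mul_nonsing_inv _ hV]
  | succ k ih =>
      rw [pow_succ, ih, pow_succ, ← Matrix.mul_assoc, ← Matrix.mul_assoc,
        Matrix.nonsing_inv_mul_cancel_right _ _ hV, ← Matrix.mul_assoc,
        Matrix.mul_assoc V (B ^ k) B]

lemma mtrace_conj (V B : Matrix m m ℚ) (hV : IsUnit V.det) :
    (V * B * V⁻¹).trace = B.trace := by
  rw [Matrix.trace_mul_comm (V * B) V⁻¹, ← Matrix.mul_assoc,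
    Matrix.nonsing_inv_mul _ hV, one_mul]

lemma mcharpoly_conj (V B : Matrix m m ℚ) (hV : IsUnit V.det) :
    (V * B * V⁻¹).charpoly = B.charpoly := by
  have hcm : charmatrix (V * B * V⁻¹)
      = (V.map C) * charmatrix B * ((V⁻¹).map C) := by
    rw [charmatrix, charmatrix]
    simp only [RingHom.mapMatrix_apply]
    rw [Matrix.mul_sub, Matrix.sub_mul]
    congr 1
    · have hscal : (V.map C) * Matrix.scalar m (X : ℚ[X]) = Matrix.scalar m (X : ℚ[X]) * (V.map C) :=
        (Matrix.scalar_commute (X : ℚ[X]) (fun r' => Commute.all _ _) (V.map C)).symm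
      rw [hscal, Matrix.mul_assoc, ← Matrix.map_mul, Matrix.mul_nonsing_inv _ hV]
      simp
    · rw [Matrix.map_mul, Matrix.map_mul]
  rw [Matrix.charpoly, Matrix.charpoly, hcm, Matrix.det_mul, Matrix.det_mul]
  have hdet : (V.map C).det * ((V⁻¹).map C).det = 1 := by
    rw [← Matrix.det_mul, ← Matrix.map_mul, Matrix.mul_nonsing_inv _ hV]
    simp
  calc (V.map C).det * (charmatrix B).det * ((V⁻¹).map C).det
      = ((V.map C).det * ((V⁻¹).map C).det) * (charmatrix B).det := by ring
    _ = (charmatrix B).det := by rw [hdet, one_mul]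

lemma map_matrix_injective :
    Function.Injective (fun A : Matrix m m ℤ => A.map ((Int.cast : ℤ → ℚ))) := by
  intro A B h
  ext i j
  have := congrFun (congrFun (congrArg (fun M : Matrix m m ℚ => (M : m → m → ℚ)) h) i) j
  simpa [Matrix.map_apply] using this

lemma trace_map_int (A : Matrix m m ℤ) :
    (A.map ((Int.cast : ℤ → ℚ))).trace = ((A.trace : ℤ) : ℚ) := by
  simp [Matrix.trace, Matrix.map_apply, Matrix.diag]

end Conj

section NTransfer

variable {n : ℕ} {q : ℤ}

private noncomputable def φ {n : ℕ} :
    Matrix (Fin (n + 2)) (Fin (n + 2)) ℤ →+* Matrix (Fin (n + 2)) (Fin (n + 2)) ℚ :=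
  (Int.castRingHom ℚ).mapMatrix

lemma VMatQ_isUnit (hq : q ≠ 0) : IsUnit ((φ (VMat n q)).det : ℚ) := by
  have : (φ (n := n) (VMat n q)).det = (((VMat n q).det : ℤ) : ℚ) :=
    ((Int.castRingHom ℚ).map_det (VMat n q)).symm
  rw [this, isUnit_iff_ne_zero]
  exact_mod_cast VMat_det_ne_zero hq

lemma NMatQ_conj (hq : q ≠ 0) :
    φ (NMat (n + 2) q) = φ (VMat n q) * φ (MMat (n + 2)) * (φ (VMat n q))⁻¹ := by
  have h := congrArg φ (NMat_mul_VMat (n := n) (q := q))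
  rw [_root_.map_mul, _root_.map_mul] at h
  rw [← h]
  exact (Matrix.mul_nonsing_inv_cancel_right _ _ (VMatQ_isUnit hq)).symm

lemma NMat_charpoly (hq : q ≠ 0) : (NMat (n + 2) q).charpoly = X ^ (n + 2) - 1 := by
  have h1 : ((NMat (n + 2) q).charpoly).map (Int.castRingHom ℚ)
      = ((MMat (n + 2)).charpoly).map (Int.castRingHom ℚ) := by
    rw [← Matrix.charpoly_map, ← Matrix.charpoly_map]
    show (φ (NMat (n + 2) q)).charpoly = (φ (MMat (n + 2))).charpoly
    rw [NMatQ_conj hq, mcharpoly_conj _ _ (VMatQ_isUnit hq)]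
  have h2 := Polynomial.map_injective (Int.castRingHom ℚ) Int.cast_injective h1
  rw [h2, MMat_charpoly]

lemma NMat_pow_eq_one (hq : q ≠ 0) : (NMat (n + 2) q) ^ (n + 2) = 1 := by
  apply map_matrix_injective
  show φ (NMat (n + 2) q ^ (n + 2)) = φ 1
  rw [map_pow, NMatQ_conj hq, mconj_pow _ _ (VMatQ_isUnit hq), ← map_pow φ,
    MMat_pow_eq_one, _root_.map_one, mul_one, Matrix.mul_nonsing_inv _ (VMatQ_isUnit hq)]

lemma NMat_pow_trace (hq : q ≠ 0) (k : ℕ) (hk : ¬ (n + 2) ∣ k) :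
    ((NMat (n + 2) q) ^ k).trace = 0 := by
  have h : (((NMat (n + 2) q ^ k).trace : ℤ) : ℚ) = ((((MMat (n + 2)) ^ k).trace : ℤ) : ℚ) := by
    rw [← trace_map_int, ← trace_map_int]
    show (φ (NMat (n + 2) q ^ k)).trace = (φ (MMat (n + 2) ^ k)).trace
    rw [map_pow, map_pow, NMatQ_conj hq, mconj_pow _ _ (VMatQ_isUnit hq),
      mtrace_conj _ _ (VMatQ_isUnit hq)]
  rw [MMat_pow_trace k hk] at h
  exact_mod_cast h

end NTransfer

section BlockDiagFacts

variable {mm z : ℕ}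

lemma blockDiag_apply_const (B : Fin mm → Matrix (Fin z) (Fin z) ℤ)
    (x y : (_ : Fin mm) × Fin z) :
    _root_.blockDiag B x y = if y.1 = x.1 then B x.1 x.2 y.2 else 0 := by
  by_cases h : y.1 = x.1
  · simp only [_root_.blockDiag]
    rw [dif_pos h, if_pos h]
    rfl
  · simp only [_root_.blockDiag]
    rw [dif_neg h, if_neg h]

lemma blockDiag_mul (B C : Fin mm → Matrix (Fin z) (Fin z) ℤ) :
    _root_.blockDiag B * _root_.blockDiag C = _root_.blockDiag (fun a => B a * C a) := by
  ext x y
  rw [Matrix.mul_apply]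
  conv_rhs => rw [blockDiag_apply_const]
  rw [← Finset.univ_sigma_univ, Finset.sum_sigma]
  have hinner : ∀ a : Fin mm,
      (∑ k : Fin z, _root_.blockDiag B x ⟨a, k⟩ * _root_.blockDiag C ⟨a, k⟩ y)
        = if a = x.1 then (if y.1 = x.1 then (B x.1 * C x.1) x.2 y.2 else 0) else 0 := by
    intro a
    by_cases ha : a = x.1
    · subst ha
      rw [if_pos rfl]
      by_cases hy : y.1 = x.1
      · rw [if_pos hy, Matrix.mul_apply]
        refine Finset.sum_congr rfl fun k _ => ?_
        rw [blockDiag_apply_const, blockDiag_apply_const, if_pos rfl, if_pos hy]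
      · rw [if_neg hy]
        refine Finset.sum_eq_zero fun k _ => ?_
        rw [blockDiag_apply_const (B := C), if_neg hy, mul_zero]
    · rw [if_neg ha]
      refine Finset.sum_eq_zero fun k _ => ?_
      rw [blockDiag_apply_const (B := B), if_neg ha, zero_mul]
  rw [Finset.sum_congr rfl (fun a _ => hinner a),
    Finset.sum_ite_eq' Finset.univ x.1
      (fun _ => if y.1 = x.1 then (B x.1 * C x.1) x.2 y.2 else 0),
    if_pos (Finset.mem_univ _)]

lemma blockDiag_one : _root_.blockDiag (fun _ : Fin mm => (1 : Matrix (Fin z) (Fin z) ℤ)) = 1 := by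
  ext ⟨a, i⟩ ⟨b, j⟩
  conv_rhs => rw [Matrix.one_apply]
  rw [blockDiag_apply_const]
  have hsig : ((⟨a, i⟩ : (_ : Fin mm) × Fin z) = ⟨b, j⟩) ↔ (a = b ∧ i = j) := by
    rw [Sigma.mk.inj_iff, heq_eq_eq]
  by_cases hab : b = a
  · subst hab
    rw [if_pos rfl, Matrix.one_apply]
    refine if_congr ?_ rfl rfl
    rw [hsig]
    simp
  · rw [if_neg hab, if_neg (fun hh => hab ((hsig.mp hh).1.symm))]

lemma blockDiag_pow (B : Fin mm → Matrix (Fin z) (Fin z) ℤ) (k : ℕ) :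
    (_root_.blockDiag B) ^ k = _root_.blockDiag (fun a => (B a) ^ k) := by
  induction k with
  | zero =>
      rw [pow_zero,
        show (fun a => (B a) ^ 0) = fun _ : Fin mm => (1 : Matrix (Fin z) (Fin z) ℤ) from
          funext (fun a => pow_zero (B a)),
        blockDiag_one]
  | succ k ih =>
      rw [pow_succ, ih, blockDiag_mul]
      exact congrArg _root_.blockDiag (funext fun a => (pow_succ (B a) k).symm)

lemma blockDiag_trace (B : Fin mm → Matrix (Fin z) (Fin z) ℤ) :
    (_root_.blockDiag B).trace = ∑ a, (B a).trace := by
  simp only [Matrix.trace, Matrix.diag_apply]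
  rw [← Finset.univ_sigma_univ, Finset.sum_sigma]
  refine Finset.sum_congr rfl fun a _ => Finset.sum_congr rfl fun k _ => ?_
  rw [blockDiag_apply_const, if_pos rfl]

lemma blockDiag_charpoly (B : Fin mm → Matrix (Fin z) (Fin z) ℤ) :
    (_root_.blockDiag B).charpoly = ∏ a, (B a).charpoly := by
  let e : ((_ : Fin mm) × Fin z) ≃ Fin z × Fin mm :=
    (Equiv.sigmaEquivProd (Fin mm) (Fin z)).trans (Equiv.prodComm _ _)
  have h1 : _root_.blockDiag B = (Matrix.blockDiagonal B).submatrix e e := by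
    ext x y
    rw [blockDiag_apply_const, Matrix.submatrix_apply]
    show _ = Matrix.blockDiagonal B (x.2, x.1) (y.2, y.1)
    rw [Matrix.blockDiagonal_apply]
    by_cases h : y.1 = x.1
    · rw [if_pos h, if_pos h.symm]
    · rw [if_neg h, if_neg (fun hh => h hh.symm)]
  have h2 : (Matrix.blockDiagonal B).submatrix ⇑e ⇑e
      = Matrix.reindex e.symm e.symm (Matrix.blockDiagonal B) := by
    rw [Matrix.reindex_apply, Equiv.symm_symm]
  have h3 : charmatrix (Matrix.blockDiagonal B)
      = Matrix.blockDiagonal (fun a => charmatrix (B a)) := by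
    ext ⟨i, a⟩ ⟨j, b⟩
    rw [charmatrix_apply, Matrix.blockDiagonal_apply, Matrix.blockDiagonal_apply]
    by_cases hab : a = b
    · subst hab
      rw [if_pos rfl, if_pos rfl, charmatrix_apply]
      by_cases hij : i = j
      · subst hij
        rw [Matrix.diagonal_apply_eq, Matrix.diagonal_apply_eq]
      · rw [Matrix.diagonal_apply_ne _ (fun hh => hij (Prod.ext_iff.mp hh).1),
          Matrix.diagonal_apply_ne _ hij]
    · rw [if_neg hab, if_neg hab,
        Matrix.diagonal_apply_ne _ (fun hh => hab (Prod.ext_iff.mp hh).2), map_zero,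
        sub_zero]
  rw [h1, h2, Matrix.charpoly_reindex, Matrix.charpoly, h3, Matrix.det_blockDiagonal]
  rfl

end BlockDiagFacts

lemma key_lemma (z mm : ℕ) (hz : 2 ≤ z) (q : ℤ) (hq : q ≠ 0) :
    (_root_.blockDiag (fun c : Fin mm => if (c : ℕ) = 0 then NMat z q else MMat z)).charpoly
        = ((X : ℤ[X]) ^ z - 1) ^ mm
      ∧ (_root_.blockDiag (fun c : Fin mm => if (c : ℕ) = 0 then NMat z q else MMat z)) ^ z = 1
      ∧ ∀ k : ℕ, 1 ≤ k → k ≤ z - 1 →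
          ((_root_.blockDiag (fun c : Fin mm => if (c : ℕ) = 0 then NMat z q else MMat z)) ^ k).trace
            = 0 := by
  obtain ⟨n, rfl⟩ : ∃ n, z = n + 2 := ⟨z - 2, by omega⟩
  set B : Fin mm → Matrix (Fin (n + 2)) (Fin (n + 2)) ℤ :=
    fun c => if (c : ℕ) = 0 then NMat (n + 2) q else MMat (n + 2) with hB
  have hcp : ∀ c : Fin mm, (B c).charpoly = X ^ (n + 2) - 1 := by
    intro c
    by_cases h : (c : ℕ) = 0 <;> simp only [hB]
    · rw [if_pos h, NMat_charpoly hq]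
    · rw [if_neg h, MMat_charpoly]
  have hpow : ∀ c : Fin mm, (B c) ^ (n + 2) = 1 := by
    intro c
    by_cases h : (c : ℕ) = 0 <;> simp only [hB]
    · rw [if_pos h, NMat_pow_eq_one hq]
    · rw [if_neg h, MMat_pow_eq_one]
  have htr : ∀ c : Fin mm, ∀ k, ¬ (n + 2) ∣ k → ((B c) ^ k).trace = 0 := by
    intro c k hk
    by_cases h : (c : ℕ) = 0 <;> simp only [hB]
    · rw [if_pos h]; exact NMat_pow_trace hq k hk
    · rw [if_neg h]; exact MMat_pow_trace k hk
  refine ⟨?_, ?_, ?_⟩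
  · rw [blockDiag_charpoly, Finset.prod_congr rfl (fun c _ => hcp c), Finset.prod_const,
      Finset.card_univ, Fintype.card_fin]
  · rw [blockDiag_pow,
      show (fun c => (B c) ^ (n + 2))
          = fun _ : Fin mm => (1 : Matrix (Fin (n + 2)) (Fin (n + 2)) ℤ) from funext hpow,
      blockDiag_one]
  · intro k hk1 hk2
    have hnd : ¬ (n + 2) ∣ k := by
      rintro ⟨t, rfl⟩
      rcases Nat.eq_zero_or_pos t with h0 | h0
      · subst h0; omega
      · have := Nat.le_mul_of_pos_right (n + 2) h0
        omega
    rw [blockDiag_pow, blockDiag_trace]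
    exact Finset.sum_eq_zero fun c _ => htr c k hnd

open Polynomial in
/-- for `A = N_{p^r}[p^r] ⊕ ⊕_{h=1}^{(p^r-3)/2} M_{p^r}` (the matrix of the
holonomy representation of `Γ_{p^r}`), the characteristic polynomial of `A` is
`(x^{p^r} - 1)^{(p^r-1)/2}`, `A^{p^r} = I`, `tr(A^k) = 0` for `1 ≤ k ≤ p^r - 1`, and
`tr(A^{p^r}) = p^r(p^r-1)/2` (the algebraic content of the Kähler criterion
`p^r = 4u + 1`). -/
theorem statement14 (p : ℕ) (hp : p.Prime) (hodd : Odd p) (r : ℕ) (hr : 1 ≤ r)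
    (A : Matrix ((_c : Fin ((p ^ r - 1) / 2)) × Fin (p ^ r))
      ((_c : Fin ((p ^ r - 1) / 2)) × Fin (p ^ r)) ℤ)
    (hA : A = blockDiag (fun c : Fin ((p ^ r - 1) / 2) =>
      if (c : ℕ) = 0 then NMat (p ^ r) ((p : ℤ) ^ r) else MMat (p ^ r))) :
    A.charpoly = ((X : ℤ[X]) ^ (p ^ r) - 1) ^ ((p ^ r - 1) / 2) ∧
    A ^ (p ^ r) = 1 ∧
    (∀ k : ℕ, 1 ≤ k → k ≤ p ^ r - 1 → (A ^ k).trace = 0) ∧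
    (A ^ (p ^ r)).trace = ((p ^ r * (p ^ r - 1) / 2 : ℕ) : ℤ) := by
  have hp3 : 3 ≤ p := by
    have h2 := hp.two_le
    rcases hodd with ⟨t, ht⟩
    omega
  have hz3 : 3 ≤ p ^ r := le_trans hp3 (Nat.le_self_pow (by omega) p)
  have hq : ((p : ℤ)) ^ r ≠ 0 := pow_ne_zero _ (by exact_mod_cast hp.ne_zero)
  obtain ⟨hcp, hpow, htr⟩ := key_lemma (p ^ r) ((p ^ r - 1) / 2) (by omega) ((p : ℤ) ^ r) hq
  subst hA
  refine ⟨hcp, hpow, htr, ?_⟩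
  rw [hpow, Matrix.trace_one]
  obtain ⟨u, hu⟩ := hodd.pow (n := r)
  have hcard : Fintype.card ((_c : Fin ((p ^ r - 1) / 2)) × Fin (p ^ r))
      = p ^ r * (p ^ r - 1) / 2 := by
    rw [Fintype.card_sigma]
    simp only [Fintype.card_fin]
    rw [Finset.sum_const, Finset.card_univ, Fintype.card_fin, smul_eq_mul]
    have h1 : (p ^ r - 1) / 2 = u := by omega
    have h2 : p ^ r - 1 = 2 * u := by omega
    rw [h1, h2, Nat.mul_div_assoc _ (⟨u, rfl⟩ : 2 ∣ 2 * u),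
      Nat.mul_div_cancel_left u (by norm_num)]
    exact Nat.mul_comm u (p ^ r)
  rw [hcard]
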